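/- Consider the Bernoulli(p) WARM: for n ≥ 2 and a real parameter q ∈ (0,1), let p(A) = q^{|A|}(1−q)^{n−|A|}/(1−(1−q)^n) for every nonempty A ⊆ [n], and p(∅) = 0. Then the equilibrium (1/n, …, 1/n) is linearly stable if and only if α < (1 − (1−q)^n) / (Σ_{m=2}^n q^m (1−q)^{n−m} (n²/m²) C(n−2, m−2)), and critical if and only if equality holds. -/

import Mathlib

open Finset

noncomputable section

/-- Membership in the simplex `Δ`. -/
def InSimplex {ι : Type*} [Fintype ι] (v : ι → ℝ) : Prop :=
  (∀ i, 0 ≤ v i) ∧ ∑ i, v i = 1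

/-- A WARM weight: a probability distribution on the subsets of the colour set,
giving no mass to the empty set. -/
def IsWarmWeight {ι : Type*} [Fintype ι] [DecidableEq ι] (p : Finset ι → ℝ) : Prop :=
  p ∅ = 0 ∧ (∀ A, 0 ≤ p A ∧ p A ≤ 1) ∧ ∑ A : Finset ι, p A = 1

/-- The WARM vector field `F`. -/
def warmF {ι : Type*} [Fintype ι] [DecidableEq ι] (α : ℝ) (p : Finset ι → ℝ)
    (v : ι → ℝ) (i : ι) : ℝ :=
  -v i + ∑ A ∈ Finset.univ.filter (fun A : Finset ι => i ∈ A),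
      p A * v i ^ α / (∑ j ∈ A, v j ^ α)

/-- The Jacobian matrix `D(v)`. -/
def warmD {ι : Type*} [Fintype ι] [DecidableEq ι] (α : ℝ) (p : Finset ι → ℝ)
    (v : ι → ℝ) : Matrix ι ι ℝ :=
  Matrix.of fun i k =>
    if i = k then
      -1 + α * v i ^ (α - 1) *
        ∑ A ∈ Finset.univ.filter (fun A : Finset ι => i ∈ A),
          p A * ((∑ j ∈ A, v j ^ α) - v i ^ α) / (∑ j ∈ A, v j ^ α) ^ 2
    else
      -(α * v k ^ (α - 1) * v i ^ α *
        ∑ A ∈ Finset.univ.filter (fun A : Finset ι => i ∈ A ∧ k ∈ A),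
          p A / (∑ j ∈ A, v j ^ α) ^ 2)

/-- `μ ∈ ℂ` is an eigenvalue of the real matrix `M`, i.e. a root of its
characteristic polynomial. -/
def IsEigenvalue {ι : Type*} [Fintype ι] [DecidableEq ι] (M : Matrix ι ι ℝ) (μ : ℂ) : Prop :=
  (M.charpoly.map (algebraMap ℝ ℂ)).IsRoot μ

/-- Linear stability: every complex eigenvalue has negative real part. -/
def LinStable {ι : Type*} [Fintype ι] [DecidableEq ι] (M : Matrix ι ι ℝ) : Prop :=
  ∀ μ : ℂ, IsEigenvalue M μ → μ.re < 0

/-- Linear instability: some eigenvalue has positive real part. -/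
def LinUnstable {ι : Type*} [Fintype ι] [DecidableEq ι] (M : Matrix ι ι ℝ) : Prop :=
  ∃ μ : ℂ, IsEigenvalue M μ ∧ 0 < μ.re

/-- Critical: neither linearly stable nor linearly unstable. -/
def CriticalPt {ι : Type*} [Fintype ι] [DecidableEq ι] (M : Matrix ι ι ℝ) : Prop :=
  ¬ LinStable M ∧ ¬ LinUnstable M


/-- The Bernoulli(q) WARM weight. -/
def bernP (n : ℕ) (q : ℝ) : Finset (Fin n) → ℝ :=
  fun A => if A = ∅ then 0 else q ^ A.card * (1 - q) ^ (n - A.card) / (1 - (1 - q) ^ n)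

/-!
At the barycentre all the `v_j ^ α` are equal and the Bernoulli weight of a set depends only on
its size, so the Jacobian has a single value `a` on the diagonal and a single value `b` off it.
Its eigenvalues are therefore `a + (n - 1) b`, on `(1, …, 1)`, and `a - b`. Double counting the
pairs `(A, k)` with `i, k ∈ A` shows that the diagonal sum is `n - 1` times the off-diagonal one,
whence `a + (n - 1) b = -1` and `a - b = -1 + α n² ∑_{A ⊇ {i,k}} p(A) / |A|²`; counting the
supersets of `{i, k}` by size turns the last sum into the binomial sum of the statement. So the
barycentre is stable, resp. critical, exactly when `a - b` is negative, resp. zero.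
-/

theorem Finset.sum_filter_superset_card {ι M : Type*} [Fintype ι] [DecidableEq ι]
    [AddCommMonoid M] (S : Finset ι) (f : ℕ → M) :
    ∑ A ∈ univ.filter (S ⊆ ·), f #A =
      ∑ m ∈ Icc #S (Fintype.card ι), (Fintype.card ι - #S).choose (m - #S) • f m := by
  have hS : #S ≤ Fintype.card ι := card_le_univ S
  have hdisj : ∀ B ∈ (univ \ S).powerset, Disjoint B S := fun B hB => by
    simpa [subset_sdiff] using mem_powerset.mp hB
  have hunion :
      ∑ B ∈ (univ \ S).powerset, f (#B + #S) = ∑ A ∈ univ.filter (S ⊆ ·), f #A := by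
    refine sum_nbij' (· ∪ S) (· \ S) (fun B _ => by simp)
      (fun A _ => by simp [sdiff_subset_sdiff])
      (fun B hB => union_sdiff_cancel_right (hdisj B hB))
      (fun A hA => sdiff_union_of_subset (mem_filter.mp hA).2)
      (fun B hB => by rw [card_union_of_disjoint (hdisj B hB)])
  rw [← hunion, sum_powerset_apply_card (fun m => f (m + #S)), card_univ_sdiff,
    ← Finset.Ico_add_one_right_eq_Icc, sum_Ico_eq_sum_range, Nat.sub_add_comm hS]
  refine sum_congr rfl fun m _ => ?_
  rw [add_tsub_cancel_left, add_comm]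

theorem Matrix.det_of_ite_eq {ι K : Type*} [Fintype ι] [DecidableEq ι] [Nonempty ι] [Field K]
    (a b : K) :
    (of fun i j : ι => if i = j then a else b).det =
      (a - b) ^ (Fintype.card ι - 1) * (a + (Fintype.card ι - 1) * b) := by
  rcases subsingleton_or_nontrivial ι with _ | _
  · have : Unique ι := uniqueOfSubsingleton (Classical.arbitrary ι)
    simp [det_unique, Fintype.card_unique]
  have hcard : 1 < Fintype.card ι := Fintype.one_lt_card
  rcases eq_or_ne a b with rfl | hab
  · obtain ⟨i, j, hij⟩ := exists_pair_ne ι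
    rw [det_zero_of_row_eq hij (funext fun k => by simp), sub_self,
      zero_pow (by omega), zero_mul]
  · have hsplit : (of fun i j : ι => if i = j then a else b) = (a - b) • (1 +
        replicateCol Unit (fun _ => b / (a - b)) * replicateRow Unit (fun _ : ι => (1 : K))) := by
      ext i j
      by_cases h : i = j <;>
        simp [h, mul_apply, mul_add, mul_div_cancel₀ _ (sub_ne_zero.mpr hab)]
    obtain ⟨N, hN⟩ := Nat.exists_eq_add_one_of_ne_zero (Fintype.card_pos (α := ι)).ne'
    rw [hsplit, det_smul, det_one_add_replicateCol_mul_replicateRow]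
    simp only [dotProduct, one_mul, sum_const, card_univ, nsmul_eq_mul, hN, add_tsub_cancel_right,
      pow_succ]
    push_cast
    field_simp
    ring

section Spectrum

variable {ι : Type*} [Fintype ι] [DecidableEq ι]

theorem isEigenvalue_of_ite_iff [Nontrivial ι] (a b : ℝ) (μ : ℂ) :
    IsEigenvalue (Matrix.of fun i j : ι => if i = j then a else b) μ ↔
      μ = ↑(a - b) ∨ μ = ↑(a + (Fintype.card ι - 1) * b) := by
  have hcard : Fintype.card ι - 1 ≠ 0 := by have := Fintype.one_lt_card (α := ι); omega
  have hshift : Matrix.scalar ι μ - (Matrix.of fun i j : ι => if i = j then a else b).map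
      (algebraMap ℝ ℂ) = Matrix.of fun i j => if i = j then μ - a else -(b : ℂ) := by
    ext i j
    by_cases h : i = j <;> simp [h]
  rw [IsEigenvalue, ← Matrix.charpoly_map, Polynomial.IsRoot, Matrix.eval_charpoly, hshift,
    Matrix.det_of_ite_eq, mul_eq_zero, pow_eq_zero_iff hcard, sub_eq_zero]
  push_cast
  exact or_congr ⟨fun h => by linear_combination h, fun h => by linear_combination h⟩
    ⟨fun h => by linear_combination h, fun h => by linear_combination h⟩

variable {M : Matrix ι ι ℝ} {l l' : ℝ}

theorem linStable_iff_of_isEigenvalue_iff (h : ∀ μ, IsEigenvalue M μ ↔ μ = l ∨ μ = l') :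
    LinStable M ↔ l < 0 ∧ l' < 0 := by
  simp only [LinStable, h]
  constructor
  · intro hs
    exact ⟨by simpa using hs l (.inl rfl), by simpa using hs l' (.inr rfl)⟩
  · rintro ⟨hl, hl'⟩ μ (rfl | rfl) <;> simpa

theorem linUnstable_iff_of_isEigenvalue_iff (h : ∀ μ, IsEigenvalue M μ ↔ μ = l ∨ μ = l') :
    LinUnstable M ↔ 0 < l ∨ 0 < l' := by
  simp only [LinUnstable, h]
  constructor
  · rintro ⟨μ, (rfl | rfl), hμ⟩ <;> simp_all
  · rintro (hl | hl')
    exacts [⟨l, .inl rfl, by simpa⟩, ⟨l', .inr rfl, by simpa⟩]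

theorem criticalPt_iff_of_isEigenvalue_iff (h : ∀ μ, IsEigenvalue M μ ↔ μ = l ∨ μ = l')
    (hl' : l' < 0) : CriticalPt M ↔ l = 0 := by
  rw [CriticalPt, linStable_iff_of_isEigenvalue_iff h, linUnstable_iff_of_isEigenvalue_iff h]
  constructor
  · rintro ⟨hs, hu⟩
    by_contra hl
    rcases lt_or_gt_of_ne hl with hl | hl
    exacts [hs ⟨hl, hl'⟩, hu (.inl hl)]
  · rintro rfl
    simp [hl'.not_gt]

end Spectrum

section Warm

variable {ι : Type*} [Fintype ι] [DecidableEq ι]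

theorem warmD_const (α : ℝ) (p : Finset ι → ℝ) {c : ℝ} (hc : 0 < c) :
    warmD α p (fun _ => c) = Matrix.of fun i k =>
      if i = k then -1 + α / c * ∑ A ∈ univ.filter (i ∈ ·), p A * (#A - 1) / #A ^ 2
      else -(α / c * ∑ A ∈ univ.filter (fun A => i ∈ A ∧ k ∈ A), p A / #A ^ 2) := by
  have hcard : ∀ {i} {A : Finset ι}, i ∈ A → (#A : ℝ) ≠ 0 := fun hi =>
    Nat.cast_ne_zero.mpr (card_ne_zero_of_mem hi)
  ext i k
  simp only [warmD, Matrix.of_apply, sum_const, nsmul_eq_mul, Real.rpow_sub_one hc.ne', mul_sum]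
  split_ifs
  · congr 1
    refine sum_congr rfl fun A hA => ?_
    have := hcard (mem_filter.mp hA).2
    field_simp
  · congr 1
    refine sum_congr rfl fun A hA => ?_
    have := hcard (mem_filter.mp hA).2.1
    field_simp

theorem sum_filter_mem_mul_card_sub_one {R : Type*} [CommRing R] (g : Finset ι → R) (i : ι) :
    ∑ A ∈ univ.filter (i ∈ ·), g A * (#A - 1) =
      ∑ k ∈ univ.erase i, ∑ A ∈ univ.filter (fun A => i ∈ A ∧ k ∈ A), g A := by
  calc ∑ A ∈ univ.filter (i ∈ ·), g A * (#A - 1)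
      = ∑ A ∈ univ.filter (i ∈ ·), ∑ _k ∈ A.erase i, g A := by
        refine sum_congr rfl fun A hA => ?_
        rw [sum_const, nsmul_eq_mul, card_erase_of_mem (mem_filter.mp hA).2,
          Nat.cast_sub (card_pos.mpr ⟨i, (mem_filter.mp hA).2⟩), Nat.cast_one, mul_comm]
    _ = _ := sum_comm' fun A k => by simp only [mem_filter, mem_univ, true_and, mem_erase]; tauto

def warmPairSum (n : ℕ) (w : ℕ → ℝ) : ℝ :=
  ∑ m ∈ Icc 2 n, ((n - 2).choose (m - 2) : ℝ) * (w m / m ^ 2)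

variable {p : Finset ι → ℝ} {w : ℕ → ℝ}

theorem sum_filter_pair_eq_warmPairSum (hp : ∀ A : Finset ι, A.Nonempty → p A = w #A)
    {i k : ι} (hik : i ≠ k) :
    ∑ A ∈ univ.filter (fun A => i ∈ A ∧ k ∈ A), p A / #A ^ 2 =
      warmPairSum (Fintype.card ι) w := by
  calc ∑ A ∈ univ.filter (fun A => i ∈ A ∧ k ∈ A), p A / #A ^ 2
      = ∑ A ∈ univ.filter (({i, k} : Finset ι) ⊆ ·), w #A / (#A : ℝ) ^ 2 := by
        refine sum_congr (by ext A; simp [insert_subset_iff]) fun A hA => ?_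
        rw [hp A ⟨i, (mem_filter.mp hA).2 (mem_insert_self i _)⟩]
    _ = warmPairSum (Fintype.card ι) w := by
        rw [sum_filter_superset_card _ (fun m => w m / (m : ℝ) ^ 2), card_pair hik]
        simp only [warmPairSum, nsmul_eq_mul]

theorem isEigenvalue_warmD_const_iff [Nontrivial ι] (α : ℝ)
    (hp : ∀ A : Finset ι, A.Nonempty → p A = w #A) {c : ℝ} (hc : 0 < c) (μ : ℂ) :
    IsEigenvalue (warmD α p (fun _ => c)) μ ↔
      μ = ↑(-1 + α / c * Fintype.card ι * warmPairSum (Fintype.card ι) w) ∨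
        μ = ↑(-1 : ℝ) := by
  set σ := warmPairSum (Fintype.card ι) w
  have hoff : ∀ {i k : ι}, i ≠ k →
      ∑ A ∈ univ.filter (fun A => i ∈ A ∧ k ∈ A), p A / #A ^ 2 = σ :=
    sum_filter_pair_eq_warmPairSum hp
  have hdiag : ∀ i : ι, ∑ A ∈ univ.filter (i ∈ ·), p A * (#A - 1) / #A ^ 2 =
      (Fintype.card ι - 1) * σ := by
    intro i
    simp_rw [mul_div_right_comm _ _ ((#_ : ℝ) ^ 2)]
    rw [sum_filter_mem_mul_card_sub_one, sum_congr rfl fun k hk => hoff (ne_of_mem_erase hk).symm,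
      sum_const, card_erase_of_mem (mem_univ i), card_univ, nsmul_eq_mul,
      Nat.cast_sub Fintype.card_pos, Nat.cast_one]
  have hD : warmD α p (fun _ => c) = Matrix.of fun i k =>
      if i = k then -1 + α / c * ((Fintype.card ι - 1) * σ) else -(α / c * σ) := by
    rw [warmD_const α p hc]
    ext i k
    simp only [Matrix.of_apply]
    split_ifs with h
    · rw [hdiag]
    · rw [hoff h]
  rw [hD, isEigenvalue_of_ite_iff]
  congr! 3 <;> ring

end Warm

theorem bernP_of_nonempty {n : ℕ} (q : ℝ) {A : Finset (Fin n)} (hA : A.Nonempty) :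
    bernP n q A = q ^ #A * (1 - q) ^ (n - #A) / (1 - (1 - q) ^ n) := by
  rw [bernP, if_neg hA.ne_empty]

theorem isEigenvalue_warmD_bernP_barycentre_iff {n : ℕ} (hn : 2 ≤ n) (q α : ℝ) (μ : ℂ) :
    IsEigenvalue (warmD α (bernP n q) (fun _ => 1 / (n : ℝ))) μ ↔
      μ = ↑(-1 + α * ((∑ m ∈ Icc 2 n,
          q ^ m * (1 - q) ^ (n - m) * ((n : ℝ) ^ 2 / (m : ℝ) ^ 2) * ((n - 2).choose (m - 2) : ℝ)) /
            (1 - (1 - q) ^ n))) ∨ μ = ↑(-1 : ℝ) := by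
  have : Nontrivial (Fin n) := Fin.nontrivial_iff_two_le.mpr hn
  have hpair : α / (1 / n) * n *
        warmPairSum n (fun m => q ^ m * (1 - q) ^ (n - m) / (1 - (1 - q) ^ n)) =
      α * ((∑ m ∈ Icc 2 n, q ^ m * (1 - q) ^ (n - m) * ((n : ℝ) ^ 2 / (m : ℝ) ^ 2) *
        ((n - 2).choose (m - 2) : ℝ)) / (1 - (1 - q) ^ n)) := by
    rw [warmPairSum, one_div, div_inv_eq_mul, mul_sum, sum_div, mul_sum]
    exact sum_congr rfl fun m _ => by ring
  rw [isEigenvalue_warmD_const_iff α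
    (w := fun m => q ^ m * (1 - q) ^ (n - m) / (1 - (1 - q) ^ n))
    (fun A hA => bernP_of_nonempty q hA) (by positivity), Fintype.card_fin, hpair]

theorem bernoulli_barycentre_stability_general (n : ℕ) (hn : 2 ≤ n) (q : ℝ) (hq0 : 0 < q)
    (hq1 : q < 1) (α : ℝ) :
    (LinStable (warmD α (bernP n q) (fun _ => 1 / (n : ℝ))) ↔
      α < (1 - (1 - q) ^ n) /
        ∑ m ∈ Finset.Icc 2 n,
          q ^ m * (1 - q) ^ (n - m) * ((n : ℝ) ^ 2 / (m : ℝ) ^ 2) *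
            ((n - 2).choose (m - 2) : ℝ)) ∧
    (CriticalPt (warmD α (bernP n q) (fun _ => 1 / (n : ℝ))) ↔
      α = (1 - (1 - q) ^ n) /
        ∑ m ∈ Finset.Icc 2 n,
          q ^ m * (1 - q) ^ (n - m) * ((n : ℝ) ^ 2 / (m : ℝ) ^ 2) *
            ((n - 2).choose (m - 2) : ℝ)) := by
  set Z := 1 - (1 - q) ^ n
  set S := ∑ m ∈ Finset.Icc 2 n, q ^ m * (1 - q) ^ (n - m) * ((n : ℝ) ^ 2 / (m : ℝ) ^ 2) *
    ((n - 2).choose (m - 2) : ℝ)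
  have hZ : 0 < Z := sub_pos.mpr (pow_lt_one₀ (by linarith) (by linarith) (by omega))
  have hS : 0 < S := by
    refine sum_pos (fun m hm => ?_) ⟨2, mem_Icc.mpr ⟨le_rfl, hn⟩⟩
    obtain ⟨hm2, hmn⟩ := mem_Icc.mp hm
    have : 0 < (n - 2).choose (m - 2) := Nat.choose_pos (by omega)
    have : 0 < 1 - q := by linarith
    positivity
  have hspec : ∀ μ, IsEigenvalue (warmD α (bernP n q) (fun _ => 1 / (n : ℝ))) μ ↔
      μ = ↑(-1 + α * (S / Z)) ∨ μ = ↑(-1 : ℝ) :=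
    isEigenvalue_warmD_bernP_barycentre_iff hn q α
  rw [linStable_iff_of_isEigenvalue_iff hspec,
    criticalPt_iff_of_isEigenvalue_iff hspec (by norm_num),
    lt_div_iff₀ hS, eq_div_iff hS.ne', ← mul_div_assoc, neg_add_lt_iff_lt_add, add_zero,
    div_lt_one hZ, neg_add_eq_zero, eq_comm, div_eq_one_iff_eq hZ.ne']
  exact ⟨and_iff_left (by norm_num), Iff.rfl⟩

/-- **Stability of `1/n` for the Bernoulli(q) WARM.**
The barycentre is linearly stable iff
`α < (1−(1−q)ⁿ)/(Σ_{m=2}^n qᵐ(1−q)^{n−m} (n²/m²) C(n−2,m−2))`, critical iff equality. -/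
theorem bernoulli_barycentre_stability (n : ℕ) (hn : 2 ≤ n) (q : ℝ) (hq0 : 0 < q)
    (hq1 : q < 1) (α : ℝ) (hα : 1 < α) :
    (LinStable (warmD α (bernP n q) (fun _ => 1 / (n : ℝ))) ↔
      α < (1 - (1 - q) ^ n) /
        ∑ m ∈ Finset.Icc 2 n,
          q ^ m * (1 - q) ^ (n - m) * ((n : ℝ) ^ 2 / (m : ℝ) ^ 2) *
            ((n - 2).choose (m - 2) : ℝ)) ∧
    (CriticalPt (warmD α (bernP n q) (fun _ => 1 / (n : ℝ))) ↔
      α = (1 - (1 - q) ^ n) /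
        ∑ m ∈ Finset.Icc 2 n,
          q ^ m * (1 - q) ^ (n - m) * ((n : ℝ) ^ 2 / (m : ℝ) ^ 2) *
            ((n - 2).choose (m - 2) : ℝ)) :=
  bernoulli_barycentre_stability_general n hn q hq0 hq1 α

end
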